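/- If the conditional support of the next-day forward curve vector contains an open neighborhood condition, arbitrage is excluded: in the one-period futures market with payoff vectors S₁ = exp(G₁) componentwise and current prices S₀ = exp(G₀), if G₀ ∈ int supp(G₁) then exp(G₀) ∈ ri co supp(exp(G₁)), hence no arbitrage. -/

import Mathlib

open MeasureTheory Finset

/-- The support of a random vector: the smallest closed set of full measure. -/
def rvSupport {Ω E : Type*} [MeasurableSpace Ω] [TopologicalSpace E]
    (P : Measure Ω) (Y : Ω → E) : Set E :=
  ⋂₀ {C : Set E | IsClosed C ∧ P (Y ⁻¹' C) = 1}

/-! Componentwise `exp` is an open embedding, and a continuous map sends the support of `Y` into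
the support of its image, so `G₀ ∈ int supp G₁` gives `S₀ ∈ int supp S₁ ⊆ ri co supp S₁`.
The gain of a portfolio is `ℓ (S₁ - S₀)` for a linear functional `ℓ`; if it is a.s. nonnegative,
then `ℓ ≥ ℓ S₀` on the closed set `supp S₁`, so `ℓ` has a local minimum at the interior point
`S₀` and therefore vanishes. -/

section rvSupport

variable {Ω E : Type*} [MeasurableSpace Ω] [TopologicalSpace E] {P : Measure Ω} {Y : Ω → E}

lemma rvSupport_subset_of_ae_mem [IsProbabilityMeasure P] {C : Set E} (hC : IsClosed C)
    (hY : ∀ᵐ ω ∂P, Y ω ∈ C) : rvSupport P Y ⊆ C := by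
  refine Set.sInter_subset_of_mem ⟨hC, le_antisymm prob_le_one ?_⟩
  calc 1 = P Set.univ := measure_univ.symm
    _ ≤ P (Y ⁻¹' C) + P (Y ⁻¹' C)ᶜ := measure_univ_le_add_compl _
    _ = P (Y ⁻¹' C) := by rw [show P (Y ⁻¹' C)ᶜ = 0 from hY, add_zero]

lemma image_rvSupport_subset {F : Type*} [TopologicalSpace F] {f : E → F} (hf : Continuous f) :
    f '' rvSupport P Y ⊆ rvSupport P (f ∘ Y) := by
  rintro _ ⟨y, hy, rfl⟩ C ⟨hC, hCY⟩
  exact hy (f ⁻¹' C) ⟨hC.preimage hf, hCY⟩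

lemma image_interior_rvSupport_subset {F : Type*} [TopologicalSpace F] {f : E → F}
    (hf : Continuous f) (hfo : IsOpenMap f) :
    f '' interior (rvSupport P Y) ⊆ interior (rvSupport P (f ∘ Y)) :=
  hfo.image_interior_subset _ |>.trans <| interior_mono (image_rvSupport_subset hf)

end rvSupport

lemma ContinuousLinearMap.eq_zero_of_ae_nonneg_of_mem_interior_rvSupport {Ω E : Type*}
    [MeasurableSpace Ω] [NormedAddCommGroup E] [NormedSpace ℝ E] {P : Measure Ω}
    [IsProbabilityMeasure P] {S : Ω → E} {s₀ : E} (hs₀ : s₀ ∈ interior (rvSupport P S))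
    (ℓ : E →L[ℝ] ℝ) (hℓ : ∀ᵐ ω ∂P, 0 ≤ ℓ (S ω - s₀)) : ℓ = 0 := by
  have hsupp : rvSupport P S ⊆ {s | ℓ s₀ ≤ ℓ s} :=
    rvSupport_subset_of_ae_mem (isClosed_le continuous_const ℓ.continuous) <| by
      simpa only [Set.mem_ofPred_eq, map_sub, sub_nonneg] using hℓ
  have hmin : IsLocalMin ℓ s₀ :=
    Filter.mem_of_superset (mem_interior_iff_mem_nhds.1 hs₀) hsupp
  exact hmin.hasFDerivAt_eq_zero ℓ.hasFDerivAt

theorem interior_support_implies_no_arbitrage_general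
    {Ω : Type*} [MeasurableSpace Ω] (P : Measure Ω) [IsProbabilityMeasure P]
    (J : ℕ) (G₀ : Fin J → ℝ) (G₁ : Ω → Fin J → ℝ)
    (h : G₀ ∈ interior (rvSupport P G₁)) :
    (fun j => Real.exp (G₀ j)) ∈
      intrinsicInterior ℝ (convexHull ℝ
        (rvSupport P (fun ω => fun j => Real.exp (G₁ ω j)))) ∧
    ∀ x : Fin J → ℝ,
      (∀ᵐ ω ∂P, 0 ≤ ∑ j, x j * (Real.exp (G₁ ω j) - Real.exp (G₀ j))) →
      (∀ᵐ ω ∂P, ∑ j, x j * (Real.exp (G₁ ω j) - Real.exp (G₀ j)) = 0) := by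
  have hexp := Topology.IsOpenEmbedding.piMap fun (_ : Fin J) => Real.isOpenEmbedding_exp
  have hS₀ : (fun j => Real.exp (G₀ j)) ∈
      interior (rvSupport P (fun ω => fun j => Real.exp (G₁ ω j))) :=
    image_interior_rvSupport_subset hexp.continuous hexp.isOpenMap ⟨G₀, h, rfl⟩
  refine ⟨interior_subset_intrinsicInterior (interior_mono (subset_convexHull ℝ _) hS₀),
    fun x hx => ?_⟩
  have hx₀ := (dotProductBilin ℝ ℝ x).toContinuousLinearMap
    |>.eq_zero_of_ae_nonneg_of_mem_interior_rvSupport hS₀ hx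
  exact .of_forall fun ω => congrArg (· (fun j => Real.exp (G₁ ω j) - Real.exp (G₀ j))) hx₀

theorem interior_support_implies_no_arbitrage
    {Ω : Type*} [MeasurableSpace Ω] (P : Measure Ω) [IsProbabilityMeasure P]
    (J : ℕ) (G₀ : Fin J → ℝ) (G₁ : Ω → Fin J → ℝ) (hG₁ : Measurable G₁)
    (h : G₀ ∈ interior (rvSupport P G₁)) :
    (fun j => Real.exp (G₀ j)) ∈
      intrinsicInterior ℝ (convexHull ℝ
        (rvSupport P (fun ω => fun j => Real.exp (G₁ ω j)))) ∧
    ∀ x : Fin J → ℝ,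
      (∀ᵐ ω ∂P, 0 ≤ ∑ j, x j * (Real.exp (G₁ ω j) - Real.exp (G₀ j))) →
      (∀ᵐ ω ∂P, ∑ j, x j * (Real.exp (G₁ ω j) - Real.exp (G₀ j)) = 0) :=
  interior_support_implies_no_arbitrage_general P J G₀ G₁ h
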